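/- arXiv:1302.2531 — 2 statements merged into one kernel-verified Lean document; each statement's English description precedes it below -/
import Mathlib

section
/- Let M be an n×n real matrix with all eigenvalues of strictly positive real part, and C = ∫₀^∞ e^{-Ms} e^{-M*s} ds. Then MC is symmetric if and only if M is symmetric; consequently the area correction (MC - CM*)/2 vanishes if and only if M is symmetric. -/
open MeasureTheory Matrix Set NormedSpace

attribute [local instance] Matrix.linftyOpNormedAddCommGroup Matrix.linftyOpNormedSpace
  Matrix.linftyOpNormedRing Matrix.linftyOpNormedAlgebra

/-!
Write `E s = exp (-s • M)`. Every eigenvalue of `exp (-M)` is `exp (-λ)` for an eigenvalue `λ`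
of `M`, so `exp (-M)` has spectral radius `< 1`; by Gelfand's formula some power
`exp (-k • M)` has norm `< 1`, and the semigroup law then makes `E` decay exponentially. Hence
`C = ∫₀^∞ E s (E s)ᵀ ds` converges, it is symmetric, and integrating the derivative
`-(M E Eᵀ + E Eᵀ Mᵀ)` of `E Eᵀ` gives the Lyapunov equation `M C + C Mᵀ = 1`.
If `M C` is symmetric then `M C = C Mᵀ`, so `M (2C) = 1 = (2C) Mᵀ` and `Mᵀ = M`. Conversely a
symmetric `M` commutes with every `E s (E s)ᵀ`, hence with `C`, and `(M C)ᵀ = C M = M C`.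
-/

open Filter Topology Asymptotics

section SemigroupDecay

variable {A : Type*} [NonUnitalSeminormedRing A] {f : ℝ → A} {T : ℝ}

theorem norm_apply_natCast_mul_add_le (hmul : ∀ s t, 0 ≤ s → 0 ≤ t → f (s + t) = f s * f t)
    (hT : 0 ≤ T) (m : ℕ) {t : ℝ} (ht : 0 ≤ t) :
    ‖f (m * T + t)‖ ≤ ‖f T‖ ^ m * ‖f t‖ := by
  induction m with
  | zero => simp
  | succ m ih =>
    have hsplit : ((m + 1 : ℕ) : ℝ) * T + t = T + (m * T + t) := by push_cast; ring
    calc ‖f (((m + 1 : ℕ) : ℝ) * T + t)‖ = ‖f T * f (m * T + t)‖ := by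
          rw [hsplit, hmul _ _ hT (by positivity)]
      _ ≤ ‖f T‖ * (‖f T‖ ^ m * ‖f t‖) := (norm_mul_le _ _).trans (by gcongr)
      _ = ‖f T‖ ^ (m + 1) * ‖f t‖ := by ring

theorem exists_isBigO_exp_neg_of_norm_lt_one (hf : ContinuousOn f (Icc 0 T))
    (hmul : ∀ s t, 0 ≤ s → 0 ≤ t → f (s + t) = f s * f t) (hT : 0 < T) (hfT : ‖f T‖ < 1) :
    ∃ c > 0, f =O[atTop] fun s => Real.exp (-c * s) := by
  obtain ⟨L, hL⟩ := isCompact_Icc.exists_bound_of_continuousOn hf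
  have hL0 : 0 ≤ L := (norm_nonneg _).trans (hL 0 ⟨le_rfl, hT.le⟩)
  -- `ρ > 0` even if `f T = 0`, so that `ρ ^ m = exp (m * log ρ)`
  set ρ := max ‖f T‖ (1 / 2)
  have hρ0 : 0 < ρ := lt_max_of_lt_right (by norm_num)
  have hρ1 : ρ < 1 := max_lt hfT (by norm_num)
  set c := -Real.log ρ / T
  have hc : 0 < c := div_pos (neg_pos.2 (Real.log_neg hρ0 hρ1)) hT
  refine ⟨c, hc, IsBigO.of_bound (L * Real.exp (c * T)) ?_⟩
  filter_upwards [eventually_ge_atTop 0] with s hs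
  set m := ⌊s / T⌋₊
  have hmT : (m : ℝ) * T ≤ s := (le_div_iff₀ hT).1 (Nat.floor_le (div_nonneg hs hT.le))
  have hsm : s - T ≤ m * T := by
    have := Nat.lt_floor_add_one (s / T)
    rw [div_lt_iff₀ hT] at this
    linarith
  have hρm : ρ ^ m = Real.exp (-c * (m * T)) := by
    rw [← Real.exp_log hρ0, ← Real.exp_nat_mul]
    congr 1
    simp only [c]
    field_simp
  calc ‖f s‖ = ‖f (m * T + (s - m * T))‖ := by rw [add_sub_cancel]
    _ ≤ ‖f T‖ ^ m * ‖f (s - m * T)‖ := norm_apply_natCast_mul_add_le hmul hT.le m (by linarith)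
    _ ≤ ρ ^ m * L := by
        gcongr
        · exact le_max_left _ _
        · exact hL _ ⟨by linarith, by linarith⟩
    _ ≤ Real.exp (-c * (s - T)) * L := by
        rw [hρm]
        exact mul_le_mul_of_nonneg_right (Real.exp_le_exp.2 (by nlinarith)) hL0
    _ = L * Real.exp (c * T) * ‖Real.exp (-c * s)‖ := by
        rw [Real.norm_eq_abs, abs_of_pos (Real.exp_pos _), mul_assoc, ← Real.exp_add]
        ring_nf

end SemigroupDecay

theorem exists_norm_pow_lt_one_of_forall_norm_lt_one {A : Type*} [NormedRing A] [NormedAlgebra ℂ A]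
    [CompleteSpace A] {a : A} (ha : ∀ z ∈ spectrum ℂ a, ‖z‖ < 1) : ∃ k, 0 < k ∧ ‖a ^ k‖ < 1 := by
  have hr : spectralRadius ℂ a < 1 := by
    cases subsingleton_or_nontrivial A
    · simp [spectrum.SpectralRadius.of_subsingleton]
    · exact_mod_cast spectrum.spectralRadius_lt_of_forall_lt a (r := 1)
        fun z hz => by exact_mod_cast ha z hz
  obtain ⟨k, hk⟩ := eventually_atTop.1
    ((spectrum.pow_norm_pow_one_div_tendsto_nhds_spectralRadius a).eventually (gt_mem_nhds hr))
  refine ⟨k + 1, k.succ_pos, not_le.1 fun h => ?_⟩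
  have := ENNReal.ofReal_lt_one.1 (hk (k + 1) k.le_succ)
  exact this.not_ge (Real.one_le_rpow h (by positivity))

theorem Continuous.integrableOn_Ioi_of_isBigO_exp_neg {E : Type*} [NormedAddCommGroup E]
    {f : ℝ → E} (hf : Continuous f) {c : ℝ} (hc : 0 < c)
    (ho : f =O[atTop] fun s => Real.exp (-c * s)) (a : ℝ) : IntegrableOn f (Ioi a) :=
  ((hf.locallyIntegrable.locallyIntegrableOn _).integrableOn_of_isBigO_atTop ho
    ⟨Ioi c, Ioi_mem_atTop c, exp_neg_integrableOn_Ioi c hc⟩).mono_set Ioi_subset_Ici_self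

section Lyapunov

variable {A : Type*} [NormedRing A] [NormedAlgebra ℝ A] [CompleteSpace A]

theorem hasDerivAt_exp_neg_smul_mul_exp_neg_smul (a b : A) (s : ℝ) :
    HasDerivAt (fun u : ℝ => exp (-u • a) * exp (-u • b))
      (-(a * (exp (-s • a) * exp (-s • b))) - exp (-s • a) * exp (-s • b) * b) s := by
  have ha := hasDerivAt_exp_smul_const' (𝕂 := ℝ) (-a) s
  have hb := hasDerivAt_exp_smul_const (𝕂 := ℝ) (-b) s
  simp only [smul_neg, ← neg_smul] at ha hb
  refine (ha.mul hb).congr_deriv ?_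
  noncomm_ring

theorem mul_integral_add_integral_mul_eq_one (a b : A) {c : ℝ} (hc : 0 < c)
    (ho : (fun s : ℝ => exp (-s • a) * exp (-s • b)) =O[atTop] fun s => Real.exp (-c * s)) :
    a * (∫ s in Ioi (0 : ℝ), exp (-s • a) * exp (-s • b))
      + (∫ s in Ioi (0 : ℝ), exp (-s • a) * exp (-s • b)) * b = 1 := by
  set G : ℝ → A := fun s => exp (-s • a) * exp (-s • b)
  have hD (s : ℝ) : HasDerivAt G (-(a * G s) - G s * b) s :=
    hasDerivAt_exp_neg_smul_mul_exp_neg_smul a b s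
  have hGc : Continuous G := continuous_iff_continuousAt.2 fun s => (hD s).continuousAt
  have hGi : IntegrableOn G (Ioi 0) := hGc.integrableOn_Ioi_of_isBigO_exp_neg hc ho 0
  have hG0 : Tendsto G atTop (𝓝 0) :=
    ho.trans_tendsto (Real.tendsto_exp_atBot.comp (tendsto_id.const_mul_atTop_of_neg (by linarith)))
  have haG : IntegrableOn (fun s => -(a * G s)) (Ioi 0) := (hGi.const_mul a).neg
  have hFTC : ∫ s in Ioi (0 : ℝ), (-(a * G s) - G s * b) = 0 - G 0 :=
    integral_Ioi_of_hasDerivAt_of_tendsto' (fun s _ => hD s) (haG.sub (hGi.mul_const b)) hG0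
  rw [integral_sub haG (hGi.mul_const b), integral_neg,
    integral_const_mul_of_integrable hGi, integral_mul_const_of_integrable hGi] at hFTC
  simp only [G, neg_zero, zero_smul, exp_zero, mul_one, zero_sub] at hFTC
  rw [← neg_neg (1 : A), ← hFTC]
  abel

end Lyapunov

section MatrixDecay

variable {m : Type*} [Fintype m] [DecidableEq m]

theorem Matrix.exp_mulVec_of_mulVec_eq_smul {𝕂 : Type*} [RCLike 𝕂] {B : Matrix m m 𝕂} {l : 𝕂}
    {v : m → 𝕂} (hv : B *ᵥ v = l • v) : exp B *ᵥ v = exp l • v := by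
  have hpow (k : ℕ) : (B ^ k) *ᵥ v = l ^ k • v := by
    induction k with
    | zero => simp
    | succ k ih => rw [pow_succ, ← mulVec_mulVec, hv, mulVec_smul, ih, smul_smul, pow_succ']
  have hB := (exp_series_hasSum_exp' (𝕂 := 𝕂) B).map (mulVec.addMonoidHomLeft v)
    (continuous_id.matrix_mulVec continuous_const)
  have hl := (exp_series_hasSum_exp' (𝕂 := 𝕂) l).smul_const v
  refine hB.unique (hl.congr_fun fun k => ?_)
  simp [mulVec.addMonoidHomLeft, smul_mulVec, hpow, smul_smul]

theorem Matrix.spectrum_exp_subset (B : Matrix m m ℂ) :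
    spectrum ℂ (exp B) ⊆ Complex.exp '' spectrum ℂ B := by
  intro μ hμ
  rw [← spectrum_toLin', ← Module.End.hasEigenvalue_iff_mem_spectrum] at hμ
  have hmaps : ∀ x ∈ Module.End.eigenspace (toLin' (exp B)) μ,
      toLin' B x ∈ Module.End.eigenspace (toLin' (exp B)) μ := by
    intro x hx
    rw [Module.End.mem_eigenspace_iff, toLin'_apply] at hx ⊢
    rw [toLin'_apply, mulVec_mulVec, ← (Commute.refl B).exp_right.eq, ← mulVec_mulVec, hx,
      mulVec_smul]
  have : Nontrivial (Module.End.eigenspace (toLin' (exp B)) μ) :=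
    Submodule.nontrivial_iff_ne_bot.2 hμ
  obtain ⟨l, hl⟩ := Module.End.exists_eigenvalue ((toLin' B).restrict hmaps)
  obtain ⟨⟨w, hwμ⟩, hw⟩ := hl.exists_hasEigenvector
  have hw0 : w ≠ 0 := fun h => hw.2 (Subtype.ext h)
  have hBw : B *ᵥ w = l • w := by
    simpa [LinearMap.restrict_apply, toLin'_apply] using congrArg Subtype.val hw.apply_eq_smul
  refine ⟨l, ?_, ?_⟩
  · rw [← spectrum_toLin', ← Module.End.hasEigenvalue_iff_mem_spectrum]
    exact Module.End.hasEigenvalue_of_hasEigenvector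
      ⟨Module.End.mem_eigenspace_iff.2 (by rwa [toLin'_apply]), hw0⟩
  · have hexp := exp_mulVec_of_mulVec_eq_smul hBw
    rw [Module.End.mem_eigenspace_iff, toLin'_apply] at hwμ
    rw [hwμ, ← Complex.exp_eq_exp_ℂ] at hexp
    exact smul_left_injective ℂ hw0 hexp.symm

omit [DecidableEq m] in
theorem Matrix.linfty_opNorm_map_eq {n α β : Type*} [Fintype n] [NormedAddCommGroup α]
    [NormedAddCommGroup β] (A : Matrix m n α) (f : α → β) (hf : ∀ a, ‖f a‖₊ = ‖a‖₊) :
    ‖A.map f‖ = ‖A‖ := by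
  simp only [linfty_opNorm_def, map_apply, hf]

theorem Matrix.exp_map_algebraMap (A : Matrix m m ℝ) :
    (exp A).map (algebraMap ℝ ℂ) = exp (A.map (algebraMap ℝ ℂ)) :=
  map_exp (algebraMap ℝ ℂ).mapMatrix (continuous_id.matrix_map (continuous_algebraMap ℝ ℂ)) A

theorem Matrix.isBigO_exp_neg_smul (M : Matrix m m ℝ)
    (hM : ∀ μ ∈ spectrum ℂ (M.map (algebraMap ℝ ℂ)), 0 < μ.re) :
    ∃ c > 0, (fun s : ℝ => exp (-s • M)) =O[atTop] fun s => Real.exp (-c * s) := by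
  have hspec : ∀ z ∈ spectrum ℂ (exp (-M.map (algebraMap ℝ ℂ))), ‖z‖ < 1 := by
    intro z hz
    obtain ⟨l, hl, rfl⟩ := spectrum_exp_subset _ hz
    rw [← spectrum.neg_eq, Set.mem_neg] at hl
    rw [Complex.norm_exp, Real.exp_lt_one_iff]
    simpa using hM _ hl
  obtain ⟨k, hk, hnorm⟩ := exists_norm_pow_lt_one_of_forall_norm_lt_one hspec
  refine exists_isBigO_exp_neg_of_norm_lt_one (T := k) (by fun_prop) (fun s t _ _ => ?_)
    (by exact_mod_cast hk) ?_
  · rw [neg_add, add_smul, exp_add_of_commute]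
    exact ((Commute.refl M).smul_left _).smul_right _
  · rwa [neg_smul, ← smul_neg, Nat.cast_smul_eq_nsmul, exp_nsmul,
      ← linfty_opNorm_map_eq _ (algebraMap ℝ ℂ) Complex.nnnorm_real, ← RingHom.mapMatrix_apply,
      map_pow, RingHom.mapMatrix_apply, exp_map_algebraMap, ← RingHom.mapMatrix_apply, map_neg,
      RingHom.mapMatrix_apply]

end MatrixDecay

theorem Matrix.transpose_integral {α m n : Type*} [Fintype m] [Fintype n] [MeasurableSpace α]
    {μ : Measure α} (f : α → Matrix m n ℝ) : (∫ x, f x ∂μ)ᵀ = ∫ x, (f x)ᵀ ∂μ :=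
  ((transposeLinearEquiv m n ℝ ℝ).toContinuousLinearEquiv.integral_comp_comm f).symm

section ExpGramian

variable {m : Type*} [Fintype m] [DecidableEq m]

noncomputable def Matrix.expGramian (M : Matrix m m ℝ) : Matrix m m ℝ :=
  ∫ s in Ioi (0 : ℝ), exp (-s • M) * (exp (-s • M))ᵀ

theorem Matrix.isBigO_exp_neg_smul_mul_transpose (M : Matrix m m ℝ)
    (hM : ∀ μ ∈ spectrum ℂ (M.map (algebraMap ℝ ℂ)), 0 < μ.re) :
    ∃ c > 0, (fun s : ℝ => exp (-s • M) * (exp (-s • M))ᵀ) =O[atTop]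
      fun s => Real.exp (-c * s) := by
  obtain ⟨c, hc, ho⟩ := M.isBigO_exp_neg_smul hM
  have hoT : (fun s : ℝ => (exp (-s • M))ᵀ) =O[atTop] fun s => Real.exp (-c * s) :=
    ((transposeLinearEquiv m m ℝ ℝ).toContinuousLinearEquiv.toContinuousLinearMap.isBigO_comp
      _ _).trans ho
  refine ⟨c + c, by positivity, (ho.mul hoT).congr_right fun s => ?_⟩
  rw [← Real.exp_add]
  ring_nf

theorem Matrix.mul_expGramian_add_expGramian_mul_transpose (M : Matrix m m ℝ)
    (hM : ∀ μ ∈ spectrum ℂ (M.map (algebraMap ℝ ℂ)), 0 < μ.re) :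
    M * M.expGramian + M.expGramian * Mᵀ = 1 := by
  obtain ⟨c, hc, ho⟩ := M.isBigO_exp_neg_smul_mul_transpose hM
  simp only [← exp_transpose, transpose_smul] at ho
  have h := mul_integral_add_integral_mul_eq_one M Mᵀ hc ho
  simp only [expGramian, ← exp_transpose, transpose_smul]
  -- not `simpa`: the two sides carry different (defeq) `NormedSpace ℝ` instances
  exact h

theorem Matrix.isSymm_expGramian (M : Matrix m m ℝ) : M.expGramian.IsSymm := by
  rw [IsSymm, expGramian, transpose_integral]
  congr! 2 with s
  simp

theorem Matrix.commute_expGramian_of_isSymm {M : Matrix m m ℝ}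
    (hM : ∀ μ ∈ spectrum ℂ (M.map (algebraMap ℝ ℂ)), 0 < μ.re) (hMs : M.IsSymm) :
    Commute M M.expGramian := by
  obtain ⟨c, hc, ho⟩ := M.isBigO_exp_neg_smul_mul_transpose hM
  have hi := Continuous.integrableOn_Ioi_of_isBigO_exp_neg (by fun_prop) hc ho 0
  have hcomm (s : ℝ) : Commute M (exp (-s • M) * (exp (-s • M))ᵀ) := by
    rw [← exp_transpose, transpose_smul, hMs.eq]
    exact (((Commute.refl M).smul_right _).exp_right).mul_right
      (((Commute.refl M).smul_right _).exp_right)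
  rw [Commute, SemiconjBy, expGramian, ← integral_const_mul_of_integrable hi,
    ← integral_mul_const_of_integrable hi]
  exact integral_congr_ae (ae_of_all _ fun s => (hcomm s).eq)

end ExpGramian

theorem Matrix.IsSymm.of_mul_add_mul_transpose_eq_one {m R : Type*} [Fintype m] [DecidableEq m]
    [CommRing R] {M C : Matrix m m R} (hC : C.IsSymm) (hMC : (M * C).IsSymm)
    (h : M * C + C * Mᵀ = 1) : M.IsSymm := by
  have hCM : C * Mᵀ = M * C := by rw [← hMC.eq, transpose_mul, hC.eq]
  have hD : M * (C + C) = 1 := by rw [mul_add, ← h, hCM]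
  have hD' : (C + C) * Mᵀ = 1 := by
    rw [← transpose_one, ← hD, transpose_mul, transpose_add, hC.eq]
  calc Mᵀ = M * (C + C) * Mᵀ := by rw [hD, one_mul]
    _ = M := by rw [mul_assoc, hD', mul_one]

/-- `MC` is symmetric iff `M` is symmetric; consequently the area
correction `(MC - CM*)/2` vanishes iff `M` is symmetric. -/
theorem stmt3 (n : ℕ) (M : Matrix (Fin n) (Fin n) ℝ)
    (hM : ∀ μ ∈ spectrum ℂ (M.map (algebraMap ℝ ℂ)), 0 < μ.re)
    (C : Matrix (Fin n) (Fin n) ℝ)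
    (hC : C = ∫ s in Ioi (0:ℝ), exp (-s • M) * (exp (-s • M))ᵀ) :
    ((M * C).IsSymm ↔ M.IsSymm) ∧
      ((1/2 : ℝ) • (M * C - C * Mᵀ) = 0 ↔ M.IsSymm) := by
  replace hC : C = M.expGramian := hC
  have hCsymm : C.IsSymm := hC ▸ M.isSymm_expGramian
  have hsymm : (M * C).IsSymm ↔ M.IsSymm := by
    refine ⟨fun h => hCsymm.of_mul_add_mul_transpose_eq_one h
      (hC ▸ M.mul_expGramian_add_expGramian_mul_transpose hM), fun h => ?_⟩
    rw [IsSymm, transpose_mul, hCsymm.eq, h.eq, hC]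
    exact (commute_expGramian_of_isSymm hM h).eq.symm
  refine ⟨hsymm, ?_⟩
  rw [smul_eq_zero_iff_right (by norm_num), sub_eq_zero, ← hsymm, IsSymm, transpose_mul,
    hCsymm.eq, eq_comm]
end

section
/- Let M be an n×n real matrix with ‖e^{-τM}‖ ≤ K e^{-λτ}, λ > 0. Let γ : [0,T] → ℝⁿ be α-Hölder, α ∈ (0,1], and let z solve dz = -(M/m)z dt + dγ, z(0)=0. Then for each β < α, z converges to 0 in β-Hölder norm on [0,T] as m → 0; i.e., sup_{s≠t} |z(t)-z(s)|/|t-s|^β → 0. -/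
/-!
Put `A = m⁻¹ • M` and `μ = λ / m`, so that `‖e^{-τA}‖ ≤ K e^{-μτ}` and `‖A‖ / μ = ‖M‖ / λ` does
not depend on `m`. Integrating by parts, `z t = γ t - ∫₀ᵗ A e^{-(t-r)A} γ r dr`, and the semigroup
property gives, for `s, t ∈ [0, T]`,
  `z t = e^{-(t-s)A} (z s + γ t - γ s) - ∫ₛᵗ A e^{-(t-r)A} (γ r - γ t) dr`.
With `s = 0` and `e^{-μu} u^α ≤ (2/μ)^α e^{-μu/2}` this yields `‖z‖∞ = O(μ^{-α})`; with
`|t - s| ≤ 1/μ` it yields `‖z t - z s‖ = O(|t - s|^α)`, the constants depending only on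
`K, Hγ, α, ‖M‖/λ`. Using the first bound for `|t - s| > 1/μ` and the second otherwise gives
`‖z t - z s‖ = O(m^{α-β} |t - s|^β)`.
-/

open MeasureTheory Matrix Set NormedSpace intervalIntegral

attribute [local instance] Matrix.linftyOpNormedAddCommGroup Matrix.linftyOpNormedSpace
  Matrix.linftyOpNormedRing Matrix.linftyOpNormedAlgebra

theorem Real.rpow_le_exp {u α : ℝ} (hu : 0 ≤ u) (hα₀ : 0 ≤ α) (hα₁ : α ≤ 1) :
    u ^ α ≤ Real.exp u := by
  rcases le_or_gt u 1 with h | h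
  · exact (Real.rpow_le_one hu h hα₀).trans (Real.one_le_exp hu)
  · calc u ^ α ≤ u := Real.rpow_le_self_of_one_le h.le hα₁
      _ ≤ Real.exp u := by linarith [Real.add_one_le_exp u]

theorem Real.exp_neg_mul_mul_rpow_le {c u α : ℝ} (hc : 0 < c) (hu : 0 ≤ u) (hα₀ : 0 ≤ α)
    (hα₁ : α ≤ 1) : Real.exp (-c * u) * u ^ α ≤ c⁻¹ ^ α := by
  have hcu : (c * u) ^ α ≤ Real.exp (c * u) := Real.rpow_le_exp (by positivity) hα₀ hα₁
  calc Real.exp (-c * u) * u ^ α = c⁻¹ ^ α * ((c * u) ^ α / Real.exp (c * u)) := by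
        have : 0 < c ^ α := by positivity
        rw [Real.mul_rpow hc.le hu, Real.inv_rpow hc.le, neg_mul, Real.exp_neg]
        field_simp
    _ ≤ c⁻¹ ^ α :=
        mul_le_of_le_one_right (by positivity) (div_le_one_of_le₀ hcu (Real.exp_pos _).le)

theorem Real.exp_neg_mul_mul_rpow_le_mul_exp {c u α : ℝ} (hc : 0 < c) (hu : 0 ≤ u)
    (hα₀ : 0 ≤ α) (hα₁ : α ≤ 1) :
    Real.exp (-c * u) * u ^ α ≤ (c / 2)⁻¹ ^ α * Real.exp (-(c / 2) * u) := by
  have hsplit : Real.exp (-c * u) = Real.exp (-(c / 2) * u) * Real.exp (-(c / 2) * u) := by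
    rw [← Real.exp_add]; ring_nf
  rw [hsplit, mul_assoc, mul_comm]
  gcongr
  exact Real.exp_neg_mul_mul_rpow_le (by positivity) hu hα₀ hα₁

theorem Real.mul_rpow_le_mul_rpow {d h α : ℝ} (hd : 0 ≤ d) (hdh : d ≤ h) (hα₁ : α ≤ 1) :
    d * h ^ α ≤ h * d ^ α := by
  have hsplit : ∀ x : ℝ, 0 ≤ x → x = x ^ (1 - α) * x ^ α := fun x hx => by
    rw [← Real.rpow_add' hx (by norm_num), sub_add_cancel, Real.rpow_one]
  calc d * h ^ α = d ^ (1 - α) * h ^ α * d ^ α := by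
        nth_rw 1 [hsplit d hd]; ring
    _ ≤ h ^ (1 - α) * h ^ α * d ^ α := by
        have := Real.rpow_le_rpow hd hdh (sub_nonneg.2 hα₁)
        have := Real.rpow_nonneg (hd.trans hdh) α
        gcongr
    _ = h * d ^ α := by rw [← hsplit h (hd.trans hdh)]

theorem le_max_mul_rpow_of_le_rpow {x a b h d α β : ℝ} (hβ : 0 ≤ β) (hβα : β ≤ α) (hh : 0 < h)
    (hd : 0 < d) (ha : 0 ≤ a) (hsmall : d ≤ h → x ≤ a * d ^ α) (hlarge : x ≤ b * h ^ α) :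
    x ≤ max a b * h ^ (α - β) * d ^ β := by
  have hsplit : ∀ y : ℝ, 0 < y → y ^ α = y ^ (α - β) * y ^ β := fun y hy => by
    rw [← Real.rpow_add hy, sub_add_cancel]
  have hαβ : 0 ≤ α - β := sub_nonneg.2 hβα
  rcases le_or_gt d h with hdh | hhd
  · calc x ≤ a * (d ^ (α - β) * d ^ β) := hsplit d hd ▸ hsmall hdh
      _ ≤ max a b * (h ^ (α - β) * d ^ β) := by gcongr; exact le_max_left a b
      _ = max a b * h ^ (α - β) * d ^ β := by ring
  · calc x ≤ b * (h ^ (α - β) * h ^ β) := hsplit h hh ▸ hlarge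
      _ ≤ max a b * (h ^ (α - β) * d ^ β) := by
        have : 0 ≤ max a b := ha.trans (le_max_left a b)
        gcongr
        exact le_max_right a b
      _ = max a b * h ^ (α - β) * d ^ β := by ring

theorem exists_pos_forall_mul_rpow_le (C : ℝ) {p ε : ℝ} (hp : 0 < p) (hε : 0 < ε) :
    ∃ δ > 0, ∀ x, 0 ≤ x → x ≤ δ → C * x ^ p ≤ ε := by
  have hc : ContinuousAt (fun x : ℝ => C * x ^ p) 0 := by
    fun_prop (disch := exact Or.inr hp.le)
  obtain ⟨δ, hδ, h⟩ := Metric.continuousAt_iff.1 hc ε hε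
  refine ⟨δ / 2, by positivity, fun x hx hxδ => ?_⟩
  have := h (x := x) (by rw [Real.dist_eq, sub_zero, abs_of_nonneg hx]; linarith)
  rw [Real.dist_eq, Real.zero_rpow hp.ne', mul_zero, sub_zero] at this
  exact (le_abs_self _).trans this.le

theorem integral_exp_neg_mul_sub_le {c : ℝ} (hc : 0 < c) (s t : ℝ) :
    ∫ r in s..t, Real.exp (-c * (t - r)) ≤ c⁻¹ := by
  rw [intervalIntegral.integral_comp_sub_left (fun u => Real.exp (-c * u)) t,
    intervalIntegral.integral_comp_mul_left Real.exp (neg_ne_zero.2 hc.ne'), integral_exp,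
    sub_self, mul_zero, Real.exp_zero, smul_eq_mul, inv_neg]
  have := Real.exp_pos (-c * (t - s))
  have := inv_pos.2 hc
  nlinarith

theorem norm_integral_le_of_norm_le_mul_exp {E : Type*} [NormedAddCommGroup E] [NormedSpace ℝ E]
    {f : ℝ → E} {B c s t : ℝ} (hB : 0 ≤ B) (hc : 0 < c) (hst : s ≤ t)
    (hf : ∀ r ∈ Ioc s t, ‖f r‖ ≤ B * Real.exp (-c * (t - r))) :
    ‖∫ r in s..t, f r‖ ≤ B * c⁻¹ :=
  calc ‖∫ r in s..t, f r‖ ≤ ∫ r in s..t, B * Real.exp (-c * (t - r)) :=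
        norm_integral_le_of_norm_le hst (ae_of_all _ hf)
          ((by fun_prop : Continuous _).intervalIntegrable _ _)
    _ ≤ B * c⁻¹ := by
        rw [intervalIntegral.integral_const_mul]
        exact mul_le_mul_of_nonneg_left (integral_exp_neg_mul_sub_le hc s t) hB

theorem continuousOn_of_norm_sub_le_rpow {E : Type*} [NormedAddCommGroup E] {f : ℝ → E}
    {S : Set ℝ} {H α : ℝ} (hα : 0 < α) (hf : ∀ s ∈ S, ∀ t ∈ S, ‖f t - f s‖ ≤ H * |t - s| ^ α) :
    ContinuousOn f S := by
  intro x hx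
  have hH : Filter.Tendsto (fun t => H * |t - x| ^ α) (nhdsWithin x S) (nhds 0) := by
    have hc : Continuous fun t : ℝ => H * |t - x| ^ α := by
      fun_prop (disch := exact hα.le)
    simpa [Real.zero_rpow hα.ne'] using (hc.tendsto x).mono_left nhdsWithin_le_nhds
  exact tendsto_iff_norm_sub_tendsto_zero.2 <| squeeze_zero' (.of_forall fun _ => norm_nonneg _)
    (eventually_nhdsWithin_of_forall fun t ht => hf x hx t ht) hH

theorem HasDerivAt.mulVec_const {ι κ : Type*} [Fintype ι] [Fintype κ] {B : ℝ → Matrix ι κ ℝ}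
    {B' : Matrix ι κ ℝ} {x : ℝ} (hB : HasDerivAt B B' x) (w : κ → ℝ) :
    HasDerivAt (fun x => B x *ᵥ w) (B' *ᵥ w) x :=
  let L : Matrix ι κ ℝ →ₗ[ℝ] ι → ℝ :=
    { toFun := (· *ᵥ w), map_add' := (add_mulVec · · w), map_smul' := (smul_mulVec · · w) }
  L.toContinuousLinearMap.hasFDerivAt.comp_hasDerivAt x hB

theorem ContinuousOn.matrix_mulVec {X R m n : Type*} [TopologicalSpace X] [TopologicalSpace R]
    [NonUnitalNonAssocSemiring R] [ContinuousAdd R] [ContinuousMul R] [Fintype n]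
    {B : X → Matrix m n R} {g : X → n → R} {S : Set X} (hB : ContinuousOn B S)
    (hg : ContinuousOn g S) : ContinuousOn (fun x => B x *ᵥ g x) S := by
  rw [continuousOn_iff_continuous_domRestrict] at *
  exact hB.matrix_mulVec hg

section MatrixExp

variable {n : ℕ} (A : Matrix (Fin n) (Fin n) ℝ)

theorem hasDerivAt_exp_neg_sub_smul (t r : ℝ) :
    HasDerivAt (fun r => exp (-(t - r) • A)) (A * exp (-(t - r) • A)) r := by
  have h : HasDerivAt (fun r : ℝ => -(t - r)) 1 r := by
    simpa using (hasDerivAt_id r).sub_const t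
  have := (hasDerivAt_exp_smul_const' (𝕂 := ℝ) A (-(t - r))).scomp r h
  rwa [one_smul] at this

theorem integral_mul_exp_neg_sub_smul_mulVec (w : Fin n → ℝ) (s t : ℝ) :
    ∫ r in s..t, (A * exp (-(t - r) • A)) *ᵥ w = w - exp (-(t - s) • A) *ᵥ w := by
  rw [integral_eq_sub_of_hasDerivAt (fun r _ => (hasDerivAt_exp_neg_sub_smul A t r).mulVec_const w)
    ((by fun_prop : Continuous fun r => (A * exp (-(t - r) • A)) *ᵥ w).intervalIntegrable _ _)]
  simp

theorem mul_exp_neg_sub_smul_eq (r s t : ℝ) :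
    A * exp (-(t - r) • A) = exp (-(t - s) • A) * (A * exp (-(s - r) • A)) := by
  have hcomm : Commute (-(t - s) • A) (-(s - r) • A) := ((Commute.refl A).smul_left _).smul_right _
  have hA : Commute A (exp (-(t - s) • A)) := ((Commute.refl A).smul_right _).exp_right
  calc A * exp (-(t - r) • A) = A * (exp (-(t - s) • A) * exp (-(s - r) • A)) := by
        rw [← exp_add_of_commute _ _ hcomm, ← add_smul]; ring_nf
    _ = exp (-(t - s) • A) * (A * exp (-(s - r) • A)) := by
        rw [← mul_assoc, ← mul_assoc, hA.eq]

def HasExpDecay (K μ : ℝ) : Prop := ∀ τ : ℝ, 0 ≤ τ → ‖exp (-τ • A)‖ ≤ K * Real.exp (-μ * τ)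

variable {A} {K μ : ℝ}

theorem neg_smul_inv_smul {V : Type*} [AddCommGroup V] [Module ℝ V] (τ m : ℝ) (v : V) :
    -τ • m⁻¹ • v = -(τ / m) • v := by
  rw [smul_smul, neg_mul, div_eq_mul_inv]

theorem HasExpDecay.inv_smul (hdecay : HasExpDecay A K μ) {m : ℝ} (hm : 0 < m) :
    HasExpDecay (m⁻¹ • A) K (μ / m) := fun τ hτ => by
  rw [neg_smul_inv_smul, show -(μ / m) * τ = -μ * (τ / m) by ring]
  exact hdecay (τ / m) (by positivity)

theorem HasExpDecay.norm_mul_exp_neg_smul_mulVec_le (hdecay : HasExpDecay A K μ) {u : ℝ}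
    (hu : 0 ≤ u) (v : Fin n → ℝ) :
    ‖(A * exp (-u • A)) *ᵥ v‖ ≤ ‖A‖ * K * Real.exp (-μ * u) * ‖v‖ :=
  calc ‖(A * exp (-u • A)) *ᵥ v‖ ≤ ‖A * exp (-u • A)‖ * ‖v‖ := linfty_opNorm_mulVec _ _
    _ ≤ ‖A‖ * (K * Real.exp (-μ * u)) * ‖v‖ := by
        gcongr
        exact (norm_mul_le _ _).trans (by gcongr; exact hdecay u hu)
    _ = ‖A‖ * K * Real.exp (-μ * u) * ‖v‖ := by ring

theorem HasExpDecay.norm_exp_neg_smul_sub_one_le (hdecay : HasExpDecay A K μ) (hK : 0 ≤ K)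
    (hμ : 0 ≤ μ) {u : ℝ} (hu : 0 ≤ u) :
    ‖exp (-u • A) - 1‖ ≤ K * ‖A‖ * u := by
  have hderiv : ∀ v ∈ Icc 0 u,
      HasDerivWithinAt (fun v : ℝ => exp (-v • A)) (-(A * exp (-v • A))) (Icc 0 u) v := by
    intro v _
    have := (hasDerivAt_exp_smul_const' (𝕂 := ℝ) A (-v)).scomp v (hasDerivAt_neg' v)
    rw [neg_one_smul] at this
    exact this.hasDerivWithinAt
  have hbound : ∀ v ∈ Icc 0 u, ‖-(A * exp (-v • A))‖ ≤ K * ‖A‖ := by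
    intro v hv
    calc ‖-(A * exp (-v • A))‖ ≤ ‖A‖ * (K * Real.exp (-μ * v)) := by
          rw [norm_neg]; exact (norm_mul_le _ _).trans (by gcongr; exact hdecay v hv.1)
      _ ≤ ‖A‖ * (K * 1) := by
          gcongr; exact Real.exp_le_one_iff.2 (by nlinarith [hv.1])
      _ = K * ‖A‖ := by ring
  simpa [abs_of_nonneg hu] using (convex_Icc 0 u).norm_image_sub_le_of_norm_hasDerivWithin_le
    hderiv hbound (left_mem_Icc.2 hu) (right_mem_Icc.2 hu)

end MatrixExp

section VariationOfConstants

variable {n : ℕ} {A : Matrix (Fin n) (Fin n) ℝ} {γ : ℝ → Fin n → ℝ} {T : ℝ}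

noncomputable def variationOfConstants (A : Matrix (Fin n) (Fin n) ℝ) (γ : ℝ → Fin n → ℝ) (t : ℝ) :
    Fin n → ℝ :=
  γ t - ∫ r in (0 : ℝ)..t, (A * exp (-(t - r) • A)) *ᵥ γ r

theorem intervalIntegrable_mul_exp_neg_sub_smul_mulVec {g : ℝ → Fin n → ℝ}
    (hg : ContinuousOn g (Icc 0 T)) {a b : ℝ} (ha : a ∈ Icc 0 T) (hb : b ∈ Icc 0 T) (t : ℝ) :
    IntervalIntegrable (fun r => (A * exp (-(t - r) • A)) *ᵥ g r) volume a b :=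
  ((Continuous.continuousOn (by fun_prop)).matrix_mulVec hg |>.mono
    (uIcc_subset_Icc ha hb)).intervalIntegrable

theorem variationOfConstants_eq (hγ : ContinuousOn γ (Icc 0 T)) {s t : ℝ} (hs : s ∈ Icc 0 T)
    (ht : t ∈ Icc 0 T) :
    variationOfConstants A γ t = exp (-(t - s) • A) *ᵥ (variationOfConstants A γ s + (γ t - γ s))
      - ∫ r in s..t, (A * exp (-(t - r) • A)) *ᵥ (γ r - γ t) := by
  have h0 : (0 : ℝ) ∈ Icc 0 T := ⟨le_rfl, hs.1.trans hs.2⟩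
  have hhead : ∫ r in (0 : ℝ)..s, (A * exp (-(t - r) • A)) *ᵥ γ r
      = exp (-(t - s) • A) *ᵥ (γ s - variationOfConstants A γ s) := by
    have := (mulVecLin (exp (-(t - s) • A))).toContinuousLinearMap.intervalIntegral_comp_comm
      (intervalIntegrable_mul_exp_neg_sub_smul_mulVec (A := A) hγ h0 hs s)
    simp only [LinearMap.coe_toContinuousLinearMap', mulVecLin_apply, mulVec_mulVec,
      ← mul_exp_neg_sub_smul_eq] at this
    rw [variationOfConstants, sub_sub_cancel, this]
  have htail : ∫ r in s..t, (A * exp (-(t - r) • A)) *ᵥ γ r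
      = (∫ r in s..t, (A * exp (-(t - r) • A)) *ᵥ (γ r - γ t))
        + (γ t - exp (-(t - s) • A) *ᵥ γ t) := by
    rw [← integral_mul_exp_neg_sub_smul_mulVec, ← integral_add
      (intervalIntegrable_mul_exp_neg_sub_smul_mulVec (g := fun r => γ r - γ t)
        (hγ.sub continuousOn_const) hs ht t)
      (intervalIntegrable_mul_exp_neg_sub_smul_mulVec continuousOn_const hs ht t)]
    simp_rw [mulVec_sub, sub_add_cancel]
  rw [variationOfConstants, ← integral_add_adjacent_intervals
    (intervalIntegrable_mul_exp_neg_sub_smul_mulVec hγ h0 hs t)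
    (intervalIntegrable_mul_exp_neg_sub_smul_mulVec hγ hs ht t), hhead, htail]
  simp only [mulVec_add, mulVec_sub]
  abel

end VariationOfConstants

section Estimates

variable {n : ℕ} {A : Matrix (Fin n) (Fin n) ℝ} {γ : ℝ → Fin n → ℝ} {T K μ H α : ℝ}

theorem HasExpDecay.norm_mul_exp_mulVec_sub_le (hdecay : HasExpDecay A K μ) (hK : 0 ≤ K)
    (hγ : ∀ s ∈ Icc 0 T, ∀ t ∈ Icc 0 T, ‖γ t - γ s‖ ≤ H * |t - s| ^ α) {s t r : ℝ}
    (hs : s ∈ Icc 0 T) (ht : t ∈ Icc 0 T) (hr : r ∈ Ioc s t) :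
    ‖(A * exp (-(t - r) • A)) *ᵥ (γ r - γ t)‖
      ≤ ‖A‖ * K * H * (Real.exp (-μ * (t - r)) * (t - r) ^ α) := by
  have htr : 0 ≤ t - r := sub_nonneg.2 hr.2
  have hγr : ‖γ r - γ t‖ ≤ H * (t - r) ^ α := by
    rw [norm_sub_rev, ← abs_of_nonneg htr]
    exact hγ r ⟨hs.1.trans hr.1.le, hr.2.trans ht.2⟩ t ht
  calc ‖(A * exp (-(t - r) • A)) *ᵥ (γ r - γ t)‖
      ≤ ‖A‖ * K * Real.exp (-μ * (t - r)) * ‖γ r - γ t‖ :=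
        hdecay.norm_mul_exp_neg_smul_mulVec_le htr _
    _ ≤ ‖A‖ * K * Real.exp (-μ * (t - r)) * (H * (t - r) ^ α) := by gcongr
    _ = ‖A‖ * K * H * (Real.exp (-μ * (t - r)) * (t - r) ^ α) := by ring

theorem HasExpDecay.norm_integral_mul_exp_mulVec_sub_le_rpow_sub (hdecay : HasExpDecay A K μ)
    (hK : 0 ≤ K) (hμ : 0 < μ) (hα₀ : 0 ≤ α) (hH : 0 ≤ H)
    (hγ : ∀ s ∈ Icc 0 T, ∀ t ∈ Icc 0 T, ‖γ t - γ s‖ ≤ H * |t - s| ^ α) {s t : ℝ}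
    (hs : s ∈ Icc 0 T) (ht : t ∈ Icc 0 T) (hst : s ≤ t) :
    ‖∫ r in s..t, (A * exp (-(t - r) • A)) *ᵥ (γ r - γ t)‖ ≤ ‖A‖ * K * H * (t - s) ^ α * μ⁻¹ := by
  refine norm_integral_le_of_norm_le_mul_exp (by positivity) hμ hst fun r hr => ?_
  calc _ ≤ ‖A‖ * K * H * (Real.exp (-μ * (t - r)) * (t - r) ^ α) :=
        hdecay.norm_mul_exp_mulVec_sub_le hK hγ hs ht hr
    _ ≤ ‖A‖ * K * H * (Real.exp (-μ * (t - r)) * (t - s) ^ α) := by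
        gcongr
        · linarith [hr.2]
        · linarith [hr.1]
    _ = ‖A‖ * K * H * (t - s) ^ α * Real.exp (-μ * (t - r)) := by ring

theorem HasExpDecay.norm_integral_mul_exp_mulVec_sub_le_rpow_inv (hdecay : HasExpDecay A K μ)
    (hK : 0 ≤ K) (hμ : 0 < μ) (hα₀ : 0 ≤ α) (hα₁ : α ≤ 1) (hH : 0 ≤ H)
    (hγ : ∀ s ∈ Icc 0 T, ∀ t ∈ Icc 0 T, ‖γ t - γ s‖ ≤ H * |t - s| ^ α) {s t : ℝ}
    (hs : s ∈ Icc 0 T) (ht : t ∈ Icc 0 T) (hst : s ≤ t) :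
    ‖∫ r in s..t, (A * exp (-(t - r) • A)) *ᵥ (γ r - γ t)‖
      ≤ ‖A‖ * K * H * (μ / 2)⁻¹ ^ α * (μ / 2)⁻¹ := by
  refine norm_integral_le_of_norm_le_mul_exp (by positivity) (by positivity) hst fun r hr => ?_
  calc _ ≤ ‖A‖ * K * H * (Real.exp (-μ * (t - r)) * (t - r) ^ α) :=
        hdecay.norm_mul_exp_mulVec_sub_le hK hγ hs ht hr
    _ ≤ ‖A‖ * K * H * ((μ / 2)⁻¹ ^ α * Real.exp (-(μ / 2) * (t - r))) := by
        exact mul_le_mul_of_nonneg_left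
          (Real.exp_neg_mul_mul_rpow_le_mul_exp hμ (sub_nonneg.2 hr.2) hα₀ hα₁) (by positivity)
    _ = ‖A‖ * K * H * (μ / 2)⁻¹ ^ α * Real.exp (-(μ / 2) * (t - r)) := by ring

theorem HasExpDecay.norm_variationOfConstants_le (hdecay : HasExpDecay A K μ) (hK : 0 ≤ K)
    (hμ : 0 < μ) (hα₀ : 0 < α) (hα₁ : α ≤ 1) (hH : 0 ≤ H) (hγ0 : γ 0 = 0)
    (hγ : ∀ s ∈ Icc 0 T, ∀ t ∈ Icc 0 T, ‖γ t - γ s‖ ≤ H * |t - s| ^ α) {t : ℝ}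
    (ht : t ∈ Icc 0 T) :
    ‖variationOfConstants A γ t‖ ≤ K * H * (1 + 2 * (‖A‖ * μ⁻¹)) * 2 ^ α * μ⁻¹ ^ α := by
  have h0 : (0 : ℝ) ∈ Icc 0 T := ⟨le_rfl, ht.1.trans ht.2⟩
  have hμ2 : (μ / 2)⁻¹ = 2 * μ⁻¹ := by rw [inv_div, div_eq_mul_inv]
  have hγt : ‖γ t‖ ≤ H * t ^ α := by
    simpa [hγ0, abs_of_nonneg ht.1] using hγ 0 h0 t ht
  have hhead : ‖exp (-t • A) *ᵥ γ t‖ ≤ K * H * (μ / 2)⁻¹ ^ α :=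
    calc _ ≤ ‖exp (-t • A)‖ * ‖γ t‖ := linfty_opNorm_mulVec _ _
      _ ≤ K * Real.exp (-μ * t) * (H * t ^ α) := by
        gcongr; exact hdecay t ht.1
      _ = K * H * (Real.exp (-μ * t) * t ^ α) := by ring
      _ ≤ K * H * ((μ / 2)⁻¹ ^ α * Real.exp (-(μ / 2) * t)) := mul_le_mul_of_nonneg_left
        (Real.exp_neg_mul_mul_rpow_le_mul_exp hμ ht.1 hα₀.le hα₁) (by positivity)
      _ = K * H * (μ / 2)⁻¹ ^ α * Real.exp (-(μ / 2) * t) := by ring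
      _ ≤ K * H * (μ / 2)⁻¹ ^ α :=
        mul_le_of_le_one_right (by positivity) (Real.exp_le_one_iff.2 (by nlinarith [ht.1]))
  have hvoc0 : variationOfConstants A γ 0 = 0 := by simp [variationOfConstants, hγ0]
  rw [variationOfConstants_eq (continuousOn_of_norm_sub_le_rpow hα₀ hγ) h0 ht, hvoc0, hγ0,
    zero_add]
  simp only [sub_zero]
  calc _ ≤ K * H * (μ / 2)⁻¹ ^ α + ‖A‖ * K * H * (μ / 2)⁻¹ ^ α * (μ / 2)⁻¹ :=
        (norm_sub_le _ _).trans (add_le_add hhead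
          (hdecay.norm_integral_mul_exp_mulVec_sub_le_rpow_inv hK hμ hα₀.le hα₁ hH hγ h0 ht ht.1))
    _ = _ := by rw [hμ2, Real.mul_rpow zero_le_two (by positivity)]; ring

theorem HasExpDecay.norm_variationOfConstants_sub_le (hdecay : HasExpDecay A K μ) (hK : 0 ≤ K)
    (hμ : 0 < μ) (hα₀ : 0 < α) (hα₁ : α ≤ 1) (hH : 0 ≤ H) (hγ0 : γ 0 = 0)
    (hγ : ∀ s ∈ Icc 0 T, ∀ t ∈ Icc 0 T, ‖γ t - γ s‖ ≤ H * |t - s| ^ α) {s t : ℝ}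
    (hs : s ∈ Icc 0 T) (ht : t ∈ Icc 0 T) (hst : s ≤ t) (hts : t - s ≤ μ⁻¹) :
    ‖variationOfConstants A γ t - variationOfConstants A γ s‖
      ≤ (K * H * (1 + ‖A‖ * μ⁻¹) + K * (‖A‖ * μ⁻¹) * (K * H * (1 + 2 * (‖A‖ * μ⁻¹)) * 2 ^ α))
        * (t - s) ^ α := by
  set C₀ := K * H * (1 + 2 * (‖A‖ * μ⁻¹)) * 2 ^ α
  set E := exp (-(t - s) • A)
  have hd : 0 ≤ t - s := sub_nonneg.2 hst
  have hγts : ‖γ t - γ s‖ ≤ H * (t - s) ^ α := by simpa [abs_of_nonneg hd] using hγ s hs t ht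
  have hE : ‖E‖ ≤ K := (hdecay _ hd).trans <|
    mul_le_of_le_one_right hK (Real.exp_le_one_iff.2 (by nlinarith))
  have hdrift : ‖(E - 1) *ᵥ variationOfConstants A γ s‖ ≤ K * (‖A‖ * μ⁻¹) * C₀ * (t - s) ^ α :=
    calc _ ≤ ‖E - 1‖ * ‖variationOfConstants A γ s‖ := linfty_opNorm_mulVec _ _
      _ ≤ (K * ‖A‖ * (t - s)) * (C₀ * μ⁻¹ ^ α) := by
        gcongr
        · exact hdecay.norm_exp_neg_smul_sub_one_le hK hμ.le hd
        · exact hdecay.norm_variationOfConstants_le hK hμ hα₀ hα₁ hH hγ0 hγ hs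
      _ ≤ (K * ‖A‖ * C₀) * (μ⁻¹ * (t - s) ^ α) := by
        have : 0 ≤ C₀ := by positivity
        calc _ = (K * ‖A‖ * C₀) * ((t - s) * μ⁻¹ ^ α) := by ring
          _ ≤ _ := mul_le_mul_of_nonneg_left (Real.mul_rpow_le_mul_rpow hd hts hα₁) (by positivity)
      _ = _ := by ring
  have hjump : ‖E *ᵥ (γ t - γ s)‖ ≤ K * H * (t - s) ^ α :=
    (linfty_opNorm_mulVec _ _).trans (by rw [mul_assoc]; gcongr)
  have hI := hdecay.norm_integral_mul_exp_mulVec_sub_le_rpow_sub hK hμ hα₀.le hH hγ hs ht hst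
  have hsplit : variationOfConstants A γ t - variationOfConstants A γ s
      = (E - 1) *ᵥ variationOfConstants A γ s + E *ᵥ (γ t - γ s)
        - ∫ r in s..t, (A * exp (-(t - r) • A)) *ᵥ (γ r - γ t) := by
    rw [variationOfConstants_eq (continuousOn_of_norm_sub_le_rpow hα₀ hγ) hs ht, sub_mulVec,
      one_mulVec, mulVec_add]
    abel
  rw [hsplit]
  calc _ ≤ K * (‖A‖ * μ⁻¹) * C₀ * (t - s) ^ α + K * H * (t - s) ^ α
        + ‖A‖ * K * H * (t - s) ^ α * μ⁻¹ :=
        (norm_sub_le _ _).trans (add_le_add ((norm_add_le _ _).trans (add_le_add hdrift hjump)) hI)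
    _ = _ := by ring

end Estimates

theorem HasExpDecay.exists_norm_variationOfConstants_inv_smul_sub_le {n : ℕ}
    {M : Matrix (Fin n) (Fin n) ℝ} {γ : ℝ → Fin n → ℝ} {T K lam H α β : ℝ}
    (hdecay : HasExpDecay M K lam) (hK : 0 ≤ K) (hlam : 0 < lam) (hα₀ : 0 < α) (hα₁ : α ≤ 1)
    (hβ : 0 ≤ β) (hβα : β ≤ α) (hH : 0 ≤ H) (hγ0 : γ 0 = 0)
    (hγ : ∀ s ∈ Icc 0 T, ∀ t ∈ Icc 0 T, ‖γ t - γ s‖ ≤ H * |t - s| ^ α) :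
    ∃ C, ∀ m, 0 < m → ∀ s ∈ Icc 0 T, ∀ t ∈ Icc 0 T, s ≠ t →
      ‖variationOfConstants (m⁻¹ • M) γ t - variationOfConstants (m⁻¹ • M) γ s‖
        ≤ C * m ^ (α - β) * |t - s| ^ β := by
  set ρ := ‖M‖ * lam⁻¹ with hρ_def
  set C₀ := K * H * (1 + 2 * ρ) * 2 ^ α
  set C₁ := K * H * (1 + ρ) + K * ρ * C₀
  refine ⟨max C₁ (2 * C₀) * lam⁻¹ ^ (α - β), fun m hm s hs t ht hst => ?_⟩
  wlog hlt : s < t generalizing s t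
  · rw [norm_sub_rev, abs_sub_comm]
    exact this t ht s hs hst.symm (hst.symm.lt_of_le (not_lt.1 hlt))
  have hdecay_m := hdecay.inv_smul hm
  have hμ : 0 < lam / m := by positivity
  have hρ : ‖m⁻¹ • M‖ * (lam / m)⁻¹ = ρ := by
    rw [norm_smul, norm_inv, Real.norm_of_nonneg hm.le, hρ_def]
    field_simp
  have hsmall : t - s ≤ (lam / m)⁻¹ → ‖variationOfConstants (m⁻¹ • M) γ t
      - variationOfConstants (m⁻¹ • M) γ s‖ ≤ C₁ * (t - s) ^ α := fun hd => by
    have := hdecay_m.norm_variationOfConstants_sub_le hK hμ hα₀ hα₁ hH hγ0 hγ hs ht hlt.le hd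
    rwa [hρ] at this
  have hlarge : ‖variationOfConstants (m⁻¹ • M) γ t - variationOfConstants (m⁻¹ • M) γ s‖
      ≤ 2 * C₀ * (lam / m)⁻¹ ^ α := by
    have hsup := fun r (hr : r ∈ Icc 0 T) =>
      hdecay_m.norm_variationOfConstants_le hK hμ hα₀ hα₁ hH hγ0 hγ hr
    simp only [hρ] at hsup
    linarith [norm_sub_le (variationOfConstants (m⁻¹ • M) γ t) (variationOfConstants (m⁻¹ • M) γ s),
      hsup t ht, hsup s hs]
  have key := le_max_mul_rpow_of_le_rpow hβ hβα (inv_pos.2 hμ) (sub_pos.2 hlt)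
    (by positivity) hsmall hlarge
  rw [abs_of_pos (sub_pos.2 hlt)]
  refine key.trans_eq ?_
  rw [inv_div, div_eq_mul_inv, Real.mul_rpow hm.le (by positivity)]
  ring

/-- With `z` as in Statement 11 (variation-of-constants solution of
`dz = -(M/m) z dt + dγ`, `z(0)=0`, encoded via integration by parts using `γ(0)=0`),
for each `β < α` the `β`-Hölder seminorm of `z` on `[0,T]` tends to `0` as `m → 0`. -/
theorem stmt12 (n : ℕ) (M : Matrix (Fin n) (Fin n) ℝ) (K lam : ℝ)
    (hK : 0 < K) (hlam : 0 < lam)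
    (hdecay : ∀ τ : ℝ, 0 ≤ τ → ‖exp (-τ • M)‖ ≤ K * Real.exp (-lam * τ))
    (T : ℝ) (hT : 0 < T) (α : ℝ) (hα : α ∈ Ioc (0:ℝ) 1)
    (γ : ℝ → (Fin n → ℝ)) (hγ0 : γ 0 = 0) (Hγ : ℝ)
    (hγ : ∀ s ∈ Icc (0:ℝ) T, ∀ t ∈ Icc (0:ℝ) T, ‖γ t - γ s‖ ≤ Hγ * |t - s| ^ α) :
    ∀ β : ℝ, 0 < β → β < α → ∀ ε : ℝ, 0 < ε → ∃ m₀ : ℝ, 0 < m₀ ∧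
      ∀ m : ℝ, 0 < m → m ≤ m₀ → ∀ z : ℝ → (Fin n → ℝ),
        (∀ t ∈ Icc (0:ℝ) T,
          z t = γ t - ∫ r in (0:ℝ)..t, ((m⁻¹ • M) * exp (-((t - r) / m) • M)).mulVec (γ r)) →
        ∀ s ∈ Icc (0:ℝ) T, ∀ t ∈ Icc (0:ℝ) T, s ≠ t →
          ‖z t - z s‖ ≤ ε * |t - s| ^ β := by
  intro β hβ hβα ε hε
  have hH : 0 ≤ Hγ := by
    have hT' := hγ 0 (left_mem_Icc.2 hT.le) T (right_mem_Icc.2 hT.le)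
    rw [sub_zero, abs_of_pos hT] at hT'
    exact nonneg_of_mul_nonneg_left ((norm_nonneg _).trans hT') (Real.rpow_pos_of_pos hT α)
  obtain ⟨C, hC⟩ := HasExpDecay.exists_norm_variationOfConstants_inv_smul_sub_le hdecay hK.le hlam
    hα.1 hα.2 hβ.le hβα.le hH hγ0 hγ
  obtain ⟨m₀, hm₀, hsmall⟩ := exists_pos_forall_mul_rpow_le C (sub_pos.2 hβα) hε
  refine ⟨m₀, hm₀, fun m hm hmm₀ z hz s hs t ht hst => ?_⟩
  have hz' : ∀ t ∈ Icc 0 T, z t = variationOfConstants (m⁻¹ • M) γ t := fun t ht => by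
    rw [hz t ht, variationOfConstants]
    simp only [neg_smul_inv_smul]
  rw [hz' t ht, hz' s hs]
  calc _ ≤ C * m ^ (α - β) * |t - s| ^ β := hC m hm s hs t ht hst
    _ ≤ ε * |t - s| ^ β := by gcongr; exact hsmall m hm.le hmm₀
end
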